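/- arXiv:1808.09819 — 8 statements merged into one kernel-verified Lean document; each statement's English description precedes it below -/
import Mathlib

section
/- Let N̂ᴬ and n̂ᴬ be nonnegative reals with N̂ᴬ < n̂ᴬ, and let G ≥ 1 be a positive integer. Define ρ = N̂ᴬ/(G·n̂ᴬ) and ρ' = (N̂ᴬ+1)/(G·(n̂ᴬ+1)). Then the pseudo-count N̂ = ρ(1-ρ')/(ρ'-ρ) equals N̂ᴬ·(1 + (G-1)(N̂ᴬ+1)/(G·(n̂ᴬ-N̂ᴬ))). -/
/-! The denominator `ρ' - ρ` equals `(nᴬ - Nᴬ) / (G nᴬ (nᴬ + 1))`, so dividing by it cancels the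
factor `G nᴬ` of `ρ` and leaves `N̂ = Nᴬ (G (nᴬ + 1) - (Nᴬ + 1)) / (G (nᴬ - Nᴬ))`; splitting
`G (nᴬ + 1) - (Nᴬ + 1) = G (nᴬ - Nᴬ) + (G - 1)(Nᴬ + 1)` gives the stated form. -/

section Field

variable {K : Type*} [Field K]

theorem div_mul_succ_sub_div_mul (N n G : K) (hG : G ≠ 0) (hn : n ≠ 0) (hn₁ : n + 1 ≠ 0) :
    (N + 1) / (G * (n + 1)) - N / (G * n) = (n - N) / (G * n * (n + 1)) := by
  field_simp
  ring

theorem pseudoCount_eq_of_uniform (N n G : K) (hG : G ≠ 0) (hn : n ≠ 0) (hn₁ : n + 1 ≠ 0)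
    (hNn : n - N ≠ 0) :
    N / (G * n) * (1 - (N + 1) / (G * (n + 1))) /
        ((N + 1) / (G * (n + 1)) - N / (G * n)) =
      N * (1 + (G - 1) * (N + 1) / (G * (n - N))) := by
  rw [div_mul_succ_sub_div_mul N n G hG hn hn₁]
  field_simp
  ring

end Field

theorem exact_abstraction_pseudo_count_formula
    (NA nA : ℝ) (hNA : 0 ≤ NA) (h : NA < nA) (G : ℕ) (hG : 1 ≤ G) :
    (NA / ((G : ℝ) * nA)) * (1 - (NA + 1) / ((G : ℝ) * (nA + 1))) /
      ((NA + 1) / ((G : ℝ) * (nA + 1)) - NA / ((G : ℝ) * nA))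
      = NA * (1 + ((G : ℝ) - 1) * (NA + 1) / ((G : ℝ) * (nA - NA))) := by
  have hn : 0 < nA := hNA.trans_lt h
  have hG₀ : (G : ℝ) ≠ 0 := Nat.cast_ne_zero.mpr (by omega)
  exact pseudoCount_eq_of_uniform NA nA G hG₀ hn.ne' (by linarith) (sub_ne_zero.mpr h.ne')
end

section
/- With the notation of the exact-abstraction pseudo-count formula, if the aggregation size G > 1 and 0 < N̂ᴬ < n̂ᴬ, then the ground pseudo-count strictly exceeds the abstract pseudo-count: N̂ > N̂ᴬ. -/
theorem pseudoCount_ratio_eq {NA nA G : ℝ} (hG : G ≠ 0) (hnA : nA ≠ 0) (hnA1 : nA + 1 ≠ 0)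
    (hne : nA - NA ≠ 0) :
    NA / (G * nA) * (1 - (NA + 1) / (G * (nA + 1))) /
        ((NA + 1) / (G * (nA + 1)) - NA / (G * nA)) =
      NA * (1 + (G - 1) * (NA + 1) / (G * (nA - NA))) := by
  have hdiff : (NA + 1) / (G * (nA + 1)) - NA / (G * nA) = (nA - NA) / (G * nA * (nA + 1)) := by
    field_simp
    ring
  rw [hdiff]
  field_simp
  ring

theorem ground_pseudo_count_exceeds_abstract
    (NA nA : ℝ) (hNA : 0 < NA) (h : NA < nA) (G : ℕ) (hG : 1 < G) :
    NA < (NA / ((G : ℝ) * nA)) * (1 - (NA + 1) / ((G : ℝ) * (nA + 1))) /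
      ((NA + 1) / ((G : ℝ) * (nA + 1)) - NA / ((G : ℝ) * nA)) := by
  have hG1 : (1 : ℝ) < G := by exact_mod_cast hG
  have hnA : 0 < nA := hNA.trans h
  rw [pseudoCount_ratio_eq (by positivity) hnA.ne' (by positivity) (sub_pos.2 h).ne']
  have hcorr : 0 < ((G : ℝ) - 1) * (NA + 1) / (G * (nA - NA)) := by
    have := sub_pos.2 hG1
    have := sub_pos.2 h
    positivity
  exact lt_mul_of_one_lt_right hNA (lt_add_of_pos_right 1 hcorr)
end

section
/- Suppose k > 1, G ≥ 1 an integer, n̂ᴬ ≥ k (so in particular n̂ᴬ > 0), and 0 ≤ N̂ᴬ ≤ n̂ᴬ/k. Then the ground pseudo-count N̂ = N̂ᴬ·(1 + (G-1)(N̂ᴬ+1)/(G·(n̂ᴬ-N̂ᴬ))) satisfies N̂ᴬ ≤ N̂ ≤ N̂ᴬ·(1 + 2/(k-1)). -/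
theorem pseudo_count_bounded_overestimation
    (k nA NA : ℝ) (G : ℕ) (hk : 1 < k) (hG : 1 ≤ G) (hnA : 0 < nA)
    (hNA0 : 0 ≤ NA) (hNAk : NA ≤ nA / k) (hnAk : k ≤ nA) :
    NA ≤ NA * (1 + ((G : ℝ) - 1) * (NA + 1) / ((G : ℝ) * (nA - NA))) ∧
    NA * (1 + ((G : ℝ) - 1) * (NA + 1) / ((G : ℝ) * (nA - NA)))
      ≤ NA * (1 + 2 / (k - 1)) := by
  have hk0 : (0:ℝ) < k := lt_trans one_pos hk
  have hG1 : (1:ℝ) ≤ (G:ℝ) := by exact_mod_cast hG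
  have hG0 : (0:ℝ) < (G:ℝ) := lt_of_lt_of_le one_pos hG1
  have hlt : nA / k < nA := by
    rw [div_lt_iff₀ hk0]
    nlinarith
  have hdiff : 0 < nA - NA := by linarith [lt_of_le_of_lt hNAk hlt]
  have hden : 0 < (G:ℝ) * (nA - NA) := mul_pos hG0 hdiff
  have ht0 : 0 ≤ ((G : ℝ) - 1) * (NA + 1) / ((G : ℝ) * (nA - NA)) := by
    apply div_nonneg _ (le_of_lt hden)
    nlinarith
  constructor
  · nlinarith [mul_nonneg hNA0 ht0]
  · have ht : ((G : ℝ) - 1) * (NA + 1) / ((G : ℝ) * (nA - NA)) ≤ 2 / (k - 1) := by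
      rw [div_le_div_iff₀ hden (by linarith)]
      have h1 : nA / k ≥ 1 := (le_div_iff₀ hk0).mpr (by linarith)
      have h2 : NA + 1 ≤ 2 * nA / k := by
        rw [ge_iff_le, le_div_iff₀ hk0] at h1
        rw [le_div_iff₀ hk0] at hNAk ⊢
        nlinarith
      have h3 : nA - nA / k ≤ nA - NA := by linarith
      have h4 : nA - nA / k = nA * (k - 1) / k := by field_simp
      have hA : ((G:ℝ) - 1) * (NA + 1) ≤ (G:ℝ) * (2 * nA / k) :=
        mul_le_mul (by linarith) h2 (by linarith) (le_of_lt hG0)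
      have h5 : ((G:ℝ) - 1) * (NA + 1) * (k - 1) ≤ (G:ℝ) * (2 * nA / k) * (k - 1) :=
        mul_le_mul_of_nonneg_right hA (by linarith)
      have h6 : (G:ℝ) * (2 * nA / k) * (k - 1) = 2 * ((G:ℝ) * (nA - nA / k)) := by
        rw [h4]; field_simp
      have h7 : 2 * ((G:ℝ) * (nA - nA / k)) ≤ 2 * ((G:ℝ) * (nA - NA)) := by
        have := mul_le_mul_of_nonneg_left h3 (le_of_lt hG0)
        linarith
      linarith
    have := mul_le_mul_of_nonneg_left ht hNA0
    nlinarith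
end

section
/- Suppose ρ, ρ', ρ'' ∈ (0,1) with ρ < ρ' and G ≥ 1 satisfy ρ = Ñ/ñ, ρ' = (Ñ+1)/(ñ+G), ρ'' = (Ñ+2)/(ñ+2G) for some reals Ñ ≥ 0 and ñ > 0. Then Ñ = 2ρ(ρ''-ρ')/(ρ''(ρ'-ρ) - ρ(ρ''-ρ')), provided the denominator is positive. -/
theorem corrected_pseudo_count_formula
    (ρ ρ' ρ'' Nt nt : ℝ) (G : ℕ) (hG : 1 ≤ G)
    (hρ0 : 0 < ρ) (hρ1 : ρ < 1) (hρ'0 : 0 < ρ') (hρ'1 : ρ' < 1)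
    (hρ''0 : 0 < ρ'') (hρ''1 : ρ'' < 1) (hρρ' : ρ < ρ')
    (hNt : 0 ≤ Nt) (hnt : 0 < nt)
    (h1 : ρ = Nt / nt) (h2 : ρ' = (Nt + 1) / (nt + (G : ℝ)))
    (h3 : ρ'' = (Nt + 2) / (nt + 2 * (G : ℝ)))
    (hden : 0 < ρ'' * (ρ' - ρ) - ρ * (ρ'' - ρ')) :
    Nt = 2 * ρ * (ρ'' - ρ') / (ρ'' * (ρ' - ρ) - ρ * (ρ'' - ρ')) := by
  have hG' : (0:ℝ) < (G:ℝ) := by exact_mod_cast Nat.lt_of_lt_of_le Nat.zero_lt_one hG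
  have hntG : (0:ℝ) < nt + (G:ℝ) := by linarith
  have hnt2G : (0:ℝ) < nt + 2*(G:ℝ) := by linarith
  subst h1 h2 h3
  rw [eq_div_iff (ne_of_gt hden)]
  field_simp
  ring
end

section
/- Consider finite MDPs M_G (ground) and M_A (abstract) related by a model-similarity abstraction φ with parameter η ≥ 0: for all s ∈ S_G and a, |R_G(s,a) - R_A(φ(s),a)| ≤ η and for all abstract states s̄', |T_A(φ(s),a,s̄') - Σ_{g'∈G(s̄')} T_G(s,a,g')| ≤ η. Rewards lie in [0,1] and γ ∈ [0,1). Then for all s and a, |Q*_G(s,a) - Q*_A(φ(s),a)| ≤ (η + γ|S_A|η/(1-γ))/(1-γ). -/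
theorem model_similarity_Q_value_bound
    {SG SA A : Type} [Fintype SG] [Fintype SA] [Fintype A]
    [Nonempty SG] [Nonempty SA] [Nonempty A] [DecidableEq SA]
    (φ : SG → SA) (RG : SG → A → ℝ) (RA : SA → A → ℝ)
    (TG : SG → A → SG → ℝ) (TA : SA → A → SA → ℝ)
    (γ η : ℝ) (hγ0 : 0 ≤ γ) (hγ1 : γ < 1) (hη : 0 ≤ η)
    (hRG : ∀ s a, RG s a ∈ Set.Icc (0:ℝ) 1)
    (hRA : ∀ s a, RA s a ∈ Set.Icc (0:ℝ) 1)
    (hTGpos : ∀ s a s', 0 ≤ TG s a s') (hTGsum : ∀ s a, ∑ s', TG s a s' = 1)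
    (hTApos : ∀ s a s', 0 ≤ TA s a s') (hTAsum : ∀ s a, ∑ s', TA s a s' = 1)
    (QG : SG → A → ℝ) (QA : SA → A → ℝ)
    (hQG : ∀ s a, QG s a = RG s a + γ *
      ∑ s', TG s a s' * (Finset.univ.sup' Finset.univ_nonempty fun a' => QG s' a'))
    (hQA : ∀ sb a, QA sb a = RA sb a + γ *
      ∑ sb', TA sb a sb' * (Finset.univ.sup' Finset.univ_nonempty fun a' => QA sb' a'))
    (hQGbd : ∀ s a, |QG s a| ≤ 1 / (1 - γ))
    (hQAbd : ∀ sb a, |QA sb a| ≤ 1 / (1 - γ))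
    (hR : ∀ s a, |RG s a - RA (φ s) a| ≤ η)
    (hT : ∀ s a sb', |TA (φ s) a sb' -
      ∑ g' ∈ Finset.univ.filter (fun g => φ g = sb'), TG s a g'| ≤ η) :
    ∀ s a, |QG s a - QA (φ s) a| ≤
      (η + γ * (Fintype.card SA : ℝ) * η / (1 - γ)) / (1 - γ) := by
  have hg : (0:ℝ) < 1 - γ := by linarith
  have hne : (Finset.univ : Finset (SG × A)).Nonempty := Finset.univ_nonempty
  set D := Finset.univ.sup' hne (fun p : SG × A => |QG p.1 p.2 - QA (φ p.1) p.2|) with hDdef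
  set VG : SG → ℝ := fun s' => Finset.univ.sup' Finset.univ_nonempty fun a' => QG s' a' with hVGdef
  set VA : SA → ℝ := fun sb => Finset.univ.sup' Finset.univ_nonempty fun a' => QA sb a' with hVAdef
  -- value difference bound
  have hV : ∀ s', |VG s' - VA (φ s')| ≤ D := by
    intro s'
    rw [abs_sub_le_iff]
    constructor
    · rw [sub_le_iff_le_add, hVGdef]
      apply Finset.sup'_le
      intro a' _
      have h1 : QG s' a' - QA (φ s') a' ≤ D :=
        le_trans (le_abs_self _)
          (Finset.le_sup' (fun p : SG × A => |QG p.1 p.2 - QA (φ p.1) p.2|)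
            (Finset.mem_univ (s', a')))
      have h2 : QA (φ s') a' ≤ VA (φ s') :=
        Finset.le_sup' (fun a' => QA (φ s') a') (Finset.mem_univ a')
      linarith
    · rw [sub_le_iff_le_add, hVAdef]
      apply Finset.sup'_le
      intro a' _
      have h1 : QA (φ s') a' - QG s' a' ≤ D := by
        have := Finset.le_sup' (fun p : SG × A => |QG p.1 p.2 - QA (φ p.1) p.2|)
          (Finset.mem_univ (s', a'))
        calc QA (φ s') a' - QG s' a' ≤ |QG s' a' - QA (φ s') a'| := by
              rw [abs_sub_comm]; exact le_abs_self _
          _ ≤ D := this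
      have h2 : QG s' a' ≤ VG s' :=
        Finset.le_sup' (fun a' => QG s' a') (Finset.mem_univ a')
      linarith
    -- abstract value bound
  have hVAbd : ∀ sb, |VA sb| ≤ 1 / (1 - γ) := by
    intro sb
    obtain ⟨a0, -, ha0⟩ := Finset.exists_mem_eq_sup'
      (Finset.univ_nonempty (α := A)) (fun a' => QA sb a')
    rw [hVAdef]; simp only; rw [ha0]
    exact hQAbd sb a0
  -- key contraction-style inequality
  have key : ∀ s a, |QG s a - QA (φ s) a| ≤
      η + γ * ((Fintype.card SA : ℝ) * η / (1 - γ)) + γ * D := by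
    intro s a
    rw [hQG s a, hQA (φ s) a]
    have hfib : (∑ s', TG s a s' * VA (φ s')) =
        ∑ sb', (∑ g' ∈ Finset.univ.filter (fun g => φ g = sb'), TG s a g') * VA sb' := by
      rw [← Finset.sum_fiberwise Finset.univ φ (fun s' => TG s a s' * VA (φ s'))]
      apply Finset.sum_congr rfl
      intro sb' _
      rw [Finset.sum_mul]
      apply Finset.sum_congr rfl
      intro g' hg'
      have : φ g' = sb' := (Finset.mem_filter.mp hg').2
      rw [this]
    have h1 : |(∑ s', TG s a s' * VG s') - (∑ s', TG s a s' * VA (φ s'))| ≤ D := by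
      rw [← Finset.sum_sub_distrib]
      calc |∑ s', (TG s a s' * VG s' - TG s a s' * VA (φ s'))|
          ≤ ∑ s', |TG s a s' * VG s' - TG s a s' * VA (φ s')| :=
            Finset.abs_sum_le_sum_abs _ _
        _ ≤ ∑ s', TG s a s' * D := by
            apply Finset.sum_le_sum
            intro s' _
            rw [← mul_sub, abs_mul, abs_of_nonneg (hTGpos s a s')]
            have hDnn : 0 ≤ D := le_trans (abs_nonneg _) (hV s')
            exact mul_le_mul_of_nonneg_left (hV s') (hTGpos s a s')
        _ = D := by rw [← Finset.sum_mul, hTGsum s a, one_mul]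
    have h2 : |(∑ s', TG s a s' * VA (φ s')) - (∑ sb', TA (φ s) a sb' * VA sb')| ≤
        (Fintype.card SA : ℝ) * η / (1 - γ) := by
      rw [hfib, ← Finset.sum_sub_distrib]
      calc |∑ sb', ((∑ g' ∈ Finset.univ.filter (fun g => φ g = sb'), TG s a g') * VA sb'
              - TA (φ s) a sb' * VA sb')|
          ≤ ∑ sb', |(∑ g' ∈ Finset.univ.filter (fun g => φ g = sb'), TG s a g') * VA sb'
              - TA (φ s) a sb' * VA sb'| := Finset.abs_sum_le_sum_abs _ _
        _ ≤ ∑ _sb' : SA, η * (1 / (1 - γ)) := by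
            apply Finset.sum_le_sum
            intro sb' _
            rw [← sub_mul, abs_mul]
            have ht : |(∑ g' ∈ Finset.univ.filter (fun g => φ g = sb'), TG s a g')
                - TA (φ s) a sb'| ≤ η := by
              rw [abs_sub_comm]; exact hT s a sb'
            exact mul_le_mul ht (hVAbd sb') (abs_nonneg _) hη
        _ = (Fintype.card SA : ℝ) * η / (1 - γ) := by
            rw [Finset.sum_const, Finset.card_univ, nsmul_eq_mul]
            field_simp
    have hdiff : |(∑ s', TG s a s' * VG s') - (∑ sb', TA (φ s) a sb' * VA sb')| ≤
        D + (Fintype.card SA : ℝ) * η / (1 - γ) := by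
      calc |(∑ s', TG s a s' * VG s') - (∑ sb', TA (φ s) a sb' * VA sb')|
          ≤ |(∑ s', TG s a s' * VG s') - (∑ s', TG s a s' * VA (φ s'))|
            + |(∑ s', TG s a s' * VA (φ s')) - (∑ sb', TA (φ s) a sb' * VA sb')| :=
            abs_sub_le _ _ _
        _ ≤ D + (Fintype.card SA : ℝ) * η / (1 - γ) := add_le_add h1 h2
    calc |RG s a + γ * ∑ s', TG s a s' * VG s'
          - (RA (φ s) a + γ * ∑ sb', TA (φ s) a sb' * VA sb')|
        = |(RG s a - RA (φ s) a) + γ * ((∑ s', TG s a s' * VG s')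
            - (∑ sb', TA (φ s) a sb' * VA sb'))| := by ring_nf
      _ ≤ |RG s a - RA (φ s) a| + |γ * ((∑ s', TG s a s' * VG s')
            - (∑ sb', TA (φ s) a sb' * VA sb'))| := abs_add_le _ _
      _ ≤ η + γ * (D + (Fintype.card SA : ℝ) * η / (1 - γ)) := by
          rw [abs_mul, abs_of_nonneg hγ0]
          exact add_le_add (hR s a) (mul_le_mul_of_nonneg_left hdiff hγ0)
      _ = η + γ * ((Fintype.card SA : ℝ) * η / (1 - γ)) + γ * D := by ring
  -- solve for D
  obtain ⟨p0, -, hp0⟩ := Finset.exists_mem_eq_sup' hne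
    (fun p : SG × A => |QG p.1 p.2 - QA (φ p.1) p.2|)
  have hDeq : D = |QG p0.1 p0.2 - QA (φ p0.1) p0.2| := hp0
  have hk := key p0.1 p0.2
  have hDB : D ≤ (η + γ * (Fintype.card SA : ℝ) * η / (1 - γ)) / (1 - γ) := by
    rw [le_div_iff₀ hg]
    have e : γ * ((Fintype.card SA : ℝ) * η / (1 - γ)) =
        γ * (Fintype.card SA : ℝ) * η / (1 - γ) := by ring
    nlinarith [hk, hDeq, e]
  intro s a
  exact le_trans
    (Finset.le_sup' (fun p : SG × A => |QG p.1 p.2 - QA (φ p.1) p.2|)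
      (Finset.mem_univ (s, a)))
    hDB
end

section
/- Under a model-similarity abstraction with parameter η (rewards in [0,1], discount γ ∈ [0,1)), define π_GA(s) = π*_A(φ(s)), the ground policy obtained by lifting the optimal abstract policy. Then for all ground states s, V*_G(s) - V^{π_GA}_G(s) ≤ (2η + 2γ(|S_A|-1)η)/(1-γ)². -/
private lemma sup'_abs_sub_le' {α : Type*} [Fintype α] [Nonempty α]
    (f g : α → ℝ) (δ : ℝ) (h : ∀ a, |f a - g a| ≤ δ) :
    |(Finset.univ.sup' Finset.univ_nonempty f) -
      Finset.univ.sup' Finset.univ_nonempty g| ≤ δ := by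
  rw [abs_le]
  constructor
  · have h1 : Finset.univ.sup' Finset.univ_nonempty g ≤
        (Finset.univ.sup' Finset.univ_nonempty f) + δ := by
      apply Finset.sup'_le
      intro a _
      have h2 := (abs_le.mp (h a)).1
      have h3 := Finset.le_sup' f (Finset.mem_univ a)
      linarith
    linarith
  · have h1 : Finset.univ.sup' Finset.univ_nonempty f ≤
        (Finset.univ.sup' Finset.univ_nonempty g) + δ := by
      apply Finset.sup'_le
      intro a _
      have h2 := (abs_le.mp (h a)).2
      have h3 := Finset.le_sup' g (Finset.mem_univ a)
      linarith
    linarith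

theorem model_similarity_suboptimality_bound
    {SG SA A : Type} [Fintype SG] [Fintype SA] [Fintype A]
    [Nonempty SG] [Nonempty SA] [Nonempty A] [DecidableEq SA]
    (φ : SG → SA) (RG : SG → A → ℝ) (RA : SA → A → ℝ)
    (TG : SG → A → SG → ℝ) (TA : SA → A → SA → ℝ)
    (γ η : ℝ) (hγ0 : 0 ≤ γ) (hγ1 : γ < 1) (hη : 0 ≤ η)
    (hRG : ∀ s a, RG s a ∈ Set.Icc (0:ℝ) 1)
    (hRA : ∀ s a, RA s a ∈ Set.Icc (0:ℝ) 1)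
    (hTGpos : ∀ s a s', 0 ≤ TG s a s') (hTGsum : ∀ s a, ∑ s', TG s a s' = 1)
    (hTApos : ∀ s a s', 0 ≤ TA s a s') (hTAsum : ∀ s a, ∑ s', TA s a s' = 1)
    (QG : SG → A → ℝ) (QA : SA → A → ℝ)
    (hQG : ∀ s a, QG s a = RG s a + γ *
      ∑ s', TG s a s' * (Finset.univ.sup' Finset.univ_nonempty fun a' => QG s' a'))
    (hQA : ∀ sb a, QA sb a = RA sb a + γ *
      ∑ sb', TA sb a sb' * (Finset.univ.sup' Finset.univ_nonempty fun a' => QA sb' a'))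
    (hQGbd : ∀ s a, |QG s a| ≤ 1 / (1 - γ))
    (hQAbd : ∀ sb a, |QA sb a| ≤ 1 / (1 - γ))
    (hR : ∀ s a, |RG s a - RA (φ s) a| ≤ η)
    (hT : ∀ s a sb', |TA (φ s) a sb' -
      ∑ g' ∈ Finset.univ.filter (fun g => φ g = sb'), TG s a g'| ≤ η)
    -- optimal abstract policy and its lift
    (piA : SA → A)
    (hpiA : ∀ sb, QA sb (piA sb) = Finset.univ.sup' Finset.univ_nonempty fun a => QA sb a)
    -- value of the lifted policy in the ground MDP
    (VGA : SG → ℝ)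
    (hVGA : ∀ s, VGA s = RG s (piA (φ s)) + γ * ∑ s', TG s (piA (φ s)) s' * VGA s')
    (hVGAbd : ∀ s, |VGA s| ≤ 1 / (1 - γ)) :
    ∀ s, (Finset.univ.sup' Finset.univ_nonempty fun a => QG s a) - VGA s ≤
      (2 * η + 2 * γ * ((Fintype.card SA : ℝ) - 1) * η) / (1 - γ) ^ 2 := by
  have h1γ : (0:ℝ) < 1 - γ := by linarith
  set N : ℝ := (Fintype.card SA : ℝ) with hN
  have hN1 : (1:ℝ) ≤ N := by
    simp only [hN]
    exact_mod_cast Fintype.card_pos (α := SA)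
  let VA : SA → ℝ := fun sb => Finset.univ.sup' Finset.univ_nonempty fun a' => QA sb a'
  let VG : SG → ℝ := fun s => Finset.univ.sup' Finset.univ_nonempty fun a' => QG s a'
  have hQA' : ∀ sb a, QA sb a = RA sb a + γ * ∑ sb', TA sb a sb' * VA sb' := hQA
  have hQG' : ∀ s a, QG s a = RG s a + γ * ∑ s', TG s a s' * VG s' := hQG
  have hVAQ : ∀ sb, VA sb = QA sb (piA sb) := fun sb => (hpiA sb).symm
  -- QA is nonnegative
  have hQA0 : ∀ sb a, 0 ≤ QA sb a := by
    obtain ⟨p0, _, hp0⟩ := Finset.exists_min_image (Finset.univ : Finset (SA × A))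
      (fun p => QA p.1 p.2) ⟨⟨Classical.arbitrary SA, Classical.arbitrary A⟩, Finset.mem_univ _⟩
    have hmin : ∀ sb a, QA p0.1 p0.2 ≤ QA sb a := fun sb a => hp0 (sb, a) (Finset.mem_univ _)
    have hsum : ∑ sb', TA p0.1 p0.2 sb' * QA p0.1 p0.2 ≤ ∑ sb', TA p0.1 p0.2 sb' * VA sb' := by
      apply Finset.sum_le_sum
      intro sb' _
      apply mul_le_mul_of_nonneg_left _ (hTApos _ _ _)
      exact le_trans (hmin sb' p0.2) (Finset.le_sup' _ (Finset.mem_univ p0.2))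
    have hs2 : ∑ sb', TA p0.1 p0.2 sb' * QA p0.1 p0.2 = QA p0.1 p0.2 := by
      rw [← Finset.sum_mul, hTAsum, one_mul]
    have hr := (hRA p0.1 p0.2).1
    have e := hQA' p0.1 p0.2
    have hmul := mul_le_mul_of_nonneg_left (hs2 ▸ hsum) hγ0
    have hge : γ * QA p0.1 p0.2 ≤ QA p0.1 p0.2 := by
      rw [e]; nlinarith
    have h0 : 0 ≤ QA p0.1 p0.2 := by nlinarith
    intro sb a
    exact le_trans h0 (hmin sb a)
  -- bounds on VA
  have hVAub : ∀ sb, VA sb ≤ 1 / (1 - γ) := fun sb =>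
    Finset.sup'_le _ _ (fun a _ => (abs_le.mp (hQAbd sb a)).2)
  have hVA0 : ∀ sb, 0 ≤ VA sb := fun sb =>
    le_trans (hQA0 sb (Classical.arbitrary A)) (Finset.le_sup' _ (Finset.mem_univ _))
  obtain sb0 : SA := Classical.arbitrary SA
  have hVArange : ∀ sb, |VA sb - VA sb0| ≤ 1 / (1 - γ) := by
    intro sb
    rw [abs_le]
    constructor
    · have := hVA0 sb; have := hVAub sb0; linarith
    · have := hVAub sb; have := hVA0 sb0; linarith
  set K : ℝ := (N - 1) * (η / (1 - γ)) with hKdef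
  -- fiberwise rewriting
  have hfib : ∀ s a, (∑ s', TG s a s' * VA (φ s'))
      = ∑ sb', (∑ g' ∈ Finset.univ.filter (fun g => φ g = sb'), TG s a g') * VA sb' := by
    intro s a
    rw [← Finset.sum_fiberwise Finset.univ φ (fun s' => TG s a s' * VA (φ s'))]
    apply Finset.sum_congr rfl
    intro sb' _
    rw [Finset.sum_mul]
    apply Finset.sum_congr rfl
    intro g' hg'
    rw [(Finset.mem_filter.mp hg').2]
  have hPsum : ∀ s a, (∑ sb', ∑ g' ∈ Finset.univ.filter (fun g => φ g = sb'), TG s a g') = 1 := by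
    intro s a
    rw [Finset.sum_fiberwise Finset.univ φ (TG s a)]
    exact hTGsum s a
  -- key transition comparison
  have key : ∀ s a, |(∑ s', TG s a s' * VA (φ s')) - ∑ sb', TA (φ s) a sb' * VA sb'| ≤ K := by
    intro s a
    rw [hfib s a]
    set P : SA → ℝ := fun sb' => ∑ g' ∈ Finset.univ.filter (fun g => φ g = sb'), TG s a g' with hP
    have hz : ∑ sb', (P sb' - TA (φ s) a sb') = 0 := by
      rw [Finset.sum_sub_distrib, hPsum s a, hTAsum]; ring
    have e1 : (∑ sb', P sb' * VA sb') - ∑ sb', TA (φ s) a sb' * VA sb'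
        = ∑ sb', (P sb' - TA (φ s) a sb') * (VA sb' - VA sb0) := by
      have hrw : ∀ sb' ∈ (Finset.univ : Finset SA),
          (P sb' - TA (φ s) a sb') * (VA sb' - VA sb0)
            = (P sb' * VA sb' - TA (φ s) a sb' * VA sb')
              - (P sb' - TA (φ s) a sb') * VA sb0 := by
        intro sb' _; ring
      rw [Finset.sum_congr rfl hrw, Finset.sum_sub_distrib, ← Finset.sum_mul, hz, zero_mul,
        sub_zero, Finset.sum_sub_distrib]
    rw [e1]
    calc |∑ sb', (P sb' - TA (φ s) a sb') * (VA sb' - VA sb0)|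
        ≤ ∑ sb', |(P sb' - TA (φ s) a sb') * (VA sb' - VA sb0)| :=
          Finset.abs_sum_le_sum_abs _ _
      _ = |(P sb0 - TA (φ s) a sb0) * (VA sb0 - VA sb0)|
          + ∑ sb' ∈ Finset.univ.erase sb0, |(P sb' - TA (φ s) a sb') * (VA sb' - VA sb0)| :=
          (Finset.add_sum_erase _ _ (Finset.mem_univ sb0)).symm
      _ = ∑ sb' ∈ Finset.univ.erase sb0, |(P sb' - TA (φ s) a sb') * (VA sb' - VA sb0)| := by
          simp
      _ ≤ (Finset.univ.erase sb0).card • (η * (1 / (1 - γ))) := by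
          apply Finset.sum_le_card_nsmul
          intro sb' _
          rw [abs_mul]
          apply mul_le_mul _ (hVArange sb') (abs_nonneg _) hη
          rw [abs_sub_comm]
          exact hT s a sb'
      _ ≤ K := by
          rw [nsmul_eq_mul, Finset.card_erase_of_mem (Finset.mem_univ sb0), Finset.card_univ]
          have hc : ((Fintype.card SA - 1 : ℕ) : ℝ) = N - 1 := by
            have h1 : 1 ≤ Fintype.card SA := Fintype.card_pos
            push_cast [Nat.cast_sub h1]
            rfl
          rw [hc, hKdef, mul_one_div]
  -- step lemma
  have step : ∀ (δ : ℝ) (U : SG → ℝ), (∀ s', |U s' - VA (φ s')| ≤ δ) →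
      ∀ s a, |(∑ s', TG s a s' * U s') - ∑ sb', TA (φ s) a sb' * VA sb'| ≤ δ + K := by
    intro δ U hU s a
    have h1 : |(∑ s', TG s a s' * U s') - ∑ s', TG s a s' * VA (φ s')| ≤ δ := by
      rw [← Finset.sum_sub_distrib]
      calc |∑ s', (TG s a s' * U s' - TG s a s' * VA (φ s'))|
          ≤ ∑ s', |TG s a s' * U s' - TG s a s' * VA (φ s')| := Finset.abs_sum_le_sum_abs _ _
        _ ≤ ∑ s', TG s a s' * δ := by
            apply Finset.sum_le_sum
            intro s' _
            rw [← mul_sub, abs_mul, abs_of_nonneg (hTGpos s a s')]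
            exact mul_le_mul_of_nonneg_left (hU s') (hTGpos s a s')
        _ = δ := by rw [← Finset.sum_mul, hTGsum, one_mul]
    have h2 := key s a
    have h3 := abs_sub_le (∑ s', TG s a s' * U s') (∑ s', TG s a s' * VA (φ s'))
      (∑ sb', TA (φ s) a sb' * VA sb')
    linarith
  -- contraction for δ1 : |QG - QA ∘ φ|
  obtain ⟨p1, _, hp1⟩ := Finset.exists_max_image (Finset.univ : Finset (SG × A))
    (fun p => |QG p.1 p.2 - QA (φ p.1) p.2|)
    ⟨⟨Classical.arbitrary SG, Classical.arbitrary A⟩, Finset.mem_univ _⟩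
  set δ1 : ℝ := |QG p1.1 p1.2 - QA (φ p1.1) p1.2| with hδ1def
  have hδ1all : ∀ s a, |QG s a - QA (φ s) a| ≤ δ1 := fun s a => hp1 (s, a) (Finset.mem_univ _)
  have hVGVA : ∀ s, |VG s - VA (φ s)| ≤ δ1 := fun s =>
    sup'_abs_sub_le' _ _ _ (fun a => hδ1all s a)
  have hδ1nn : 0 ≤ δ1 := abs_nonneg _
  have hb1 : δ1 ≤ η + γ * (δ1 + K) := by
    have hstep := step δ1 VG hVGVA p1.1 p1.2
    have hR' := hR p1.1 p1.2
    have habs : δ1 = |(RG p1.1 p1.2 - RA (φ p1.1) p1.2)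
        + γ * ((∑ s', TG p1.1 p1.2 s' * VG s') - ∑ sb', TA (φ p1.1) p1.2 sb' * VA sb')| := by
      rw [hδ1def, hQG' p1.1 p1.2, hQA' (φ p1.1) p1.2]
      ring_nf
    calc δ1 = _ := habs
      _ ≤ |RG p1.1 p1.2 - RA (φ p1.1) p1.2|
          + |γ * ((∑ s', TG p1.1 p1.2 s' * VG s') - ∑ sb', TA (φ p1.1) p1.2 sb' * VA sb')| :=
          abs_add_le _ _
      _ ≤ η + γ * (δ1 + K) := by
          rw [abs_mul, abs_of_nonneg hγ0]
          have := mul_le_mul_of_nonneg_left hstep hγ0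
          linarith
  -- contraction for δ2 : |VGA - VA ∘ φ|
  obtain ⟨s2, _, hs2⟩ := Finset.exists_max_image (Finset.univ : Finset SG)
    (fun s => |VGA s - VA (φ s)|) ⟨Classical.arbitrary SG, Finset.mem_univ _⟩
  set δ2 : ℝ := |VGA s2 - VA (φ s2)| with hδ2def
  have hδ2all : ∀ s, |VGA s - VA (φ s)| ≤ δ2 := fun s => hs2 s (Finset.mem_univ _)
  have hδ2nn : 0 ≤ δ2 := abs_nonneg _
  have hb2 : δ2 ≤ η + γ * (δ2 + K) := by
    have hstep := step δ2 VGA hδ2all s2 (piA (φ s2))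
    have hR' := hR s2 (piA (φ s2))
    have habs : δ2 = |(RG s2 (piA (φ s2)) - RA (φ s2) (piA (φ s2)))
        + γ * ((∑ s', TG s2 (piA (φ s2)) s' * VGA s')
            - ∑ sb', TA (φ s2) (piA (φ s2)) sb' * VA sb')| := by
      rw [hδ2def, hVGA s2, hVAQ (φ s2), hQA' (φ s2) (piA (φ s2))]
      ring_nf
    calc δ2 = _ := habs
      _ ≤ |RG s2 (piA (φ s2)) - RA (φ s2) (piA (φ s2))|
          + |γ * ((∑ s', TG s2 (piA (φ s2)) s' * VGA s')
              - ∑ sb', TA (φ s2) (piA (φ s2)) sb' * VA sb')| := abs_add_le _ _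
      _ ≤ η + γ * (δ2 + K) := by
          rw [abs_mul, abs_of_nonneg hγ0]
          have := mul_le_mul_of_nonneg_left hstep hγ0
          linarith
  -- finish
  intro s
  have h1 := (abs_le.mp (hVGVA s)).2
  have h2 := (abs_le.mp (hδ2all s)).1
  have h3 : VG s - VGA s ≤ δ1 + δ2 := by linarith
  rw [le_div_iff₀ (by positivity)]
  have hδ1fin : δ1 * (1 - γ) ≤ η + γ * K := by nlinarith
  have hδ2fin : δ2 * (1 - γ) ≤ η + γ * K := by nlinarith
  have hKD : K * (1 - γ) = (N - 1) * η := by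
    rw [hKdef]; field_simp
  have c1 : δ1 * (1 - γ) * (1 - γ) ≤ (η + γ * K) * (1 - γ) :=
    mul_le_mul_of_nonneg_right hδ1fin h1γ.le
  have c2 : δ2 * (1 - γ) * (1 - γ) ≤ (η + γ * K) * (1 - γ) :=
    mul_le_mul_of_nonneg_right hδ2fin h1γ.le
  have c3 : (VG s - VGA s) * (1 - γ) ^ 2 ≤ (δ1 + δ2) * (1 - γ) ^ 2 :=
    mul_le_mul_of_nonneg_right h3 (by positivity)
  have hγη : 0 ≤ γ * η := mul_nonneg hγ0 hη
  nlinarith [c1, c2, c3, hKD, hγη, mul_le_mul_of_nonneg_left hKD.le hγ0]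
end

section
/- There exists a 3-state, 2-action MDP with rewards in [0,1] and a model-similarity abstraction of parameter η ∈ (0,1) (aggregating two of the states) such that the lifted optimal abstract policy π_GA is not ε-optimal in the ground MDP for ε = η/(1-γ): specifically, in the ground MDP the gap V*_G(s₀) - V^{π_GA}_G(s₀) = η/(1-γ) > 0. -/
/-!
The aggregated states `s₀, s₁` have opposite optimal actions: at `s₀` only `a₂` pays (reward
`η` for ever), while at `s₁` action `a₁` pays `η` and moreover leaks into the rewarding
absorbing state `s₂` with probability `η`. Averaging over the block `{s₀, s₁}` makes both
actions pay `η / 2`, but only the averaged `a₁` keeps a leak of probability `η / 2` towards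
`s̄₁`, so `a₁` is optimal in the abstract MDP. Lifted to `s₀`, `a₁` earns nothing, whereas
the optimal ground value there is `η / (1 - γ)`.
-/

open Finset

theorem Fin.sup'_univ_two {α : Type*} [LinearOrder α] (f : Fin 2 → α) :
    univ.sup' univ_nonempty f = max (f 0) (f 1) := by
  simp [Fin.univ_succ, Finset.sup'_insert]

/-- The discounted value of a state that pays `r`, moves with probability `q` to a state of value
`w` and otherwise stays put. -/
noncomputable def loopValue (γ r q w : ℝ) : ℝ := (r + γ * q * w) / (1 - γ * (1 - q))

section loopValue

variable {γ r q w : ℝ}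

theorem one_sub_mul_one_sub_pos (hγ0 : 0 ≤ γ) (hγ1 : γ < 1) (hq : 0 ≤ q) :
    0 < 1 - γ * (1 - q) := by
  nlinarith

theorem loopValue_eq (hγ0 : 0 ≤ γ) (hγ1 : γ < 1) (hq : 0 ≤ q) :
    loopValue γ r q w = r + γ * ((1 - q) * loopValue γ r q w + q * w) := by
  have := (one_sub_mul_one_sub_pos hγ0 hγ1 hq).ne'
  unfold loopValue
  field_simp
  ring

theorem loopValue_zero : loopValue γ r 0 w = r / (1 - γ) := by
  simp [loopValue]

theorem loopValue_zero_eq_add_mul (hγ0 : 0 ≤ γ) (hγ1 : γ < 1) :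
    loopValue γ r 0 w = r + γ * loopValue γ r 0 w := by
  simpa using loopValue_eq (r := r) (w := w) hγ0 hγ1 le_rfl

theorem loopValue_nonneg (hγ0 : 0 ≤ γ) (hγ1 : γ < 1) (hq : 0 ≤ q) (hr : 0 ≤ r)
    (hw : 0 ≤ w) : 0 ≤ loopValue γ r q w :=
  div_nonneg (by positivity) (one_sub_mul_one_sub_pos hγ0 hγ1 hq).le

/-- Moving to a state worth at least staying for ever with reward `r` cannot lower the value below
that of staying for ever. -/
theorem le_one_sub_mul_loopValue (hγ0 : 0 ≤ γ) (hγ1 : γ < 1) (hq : 0 ≤ q)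
    (hw : r ≤ (1 - γ) * w) : r ≤ (1 - γ) * loopValue γ r q w := by
  rw [loopValue, mul_div_assoc', le_div_iff₀ (one_sub_mul_one_sub_pos hγ0 hγ1 hq)]
  nlinarith [mul_nonneg hγ0 hq]

end loopValue

section Counterexample

variable {η γ : ℝ}

/-- States `s₀, s₁, s₂` are indexed by `0, 1, 2` and actions `a₁, a₂` by `0, 1`. -/
def groundReward (η : ℝ) : Fin 3 → Fin 2 → ℝ := ![![0, η], ![η, 0], ![1, 1]]

def groundTransition (η : ℝ) : Fin 3 → Fin 2 → Fin 3 → ℝ :=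
  ![![![1, 0, 0], ![1, 0, 0]], ![![0, 1 - η, η], ![0, 1, 0]], ![![0, 0, 1], ![0, 0, 1]]]

def aggregation : Fin 3 → Fin 2 := ![0, 0, 1]

/-- The uniform (`ω = 1/2`) average of the ground model over the blocks of `aggregation`. -/
noncomputable def abstractReward (η : ℝ) : Fin 2 → Fin 2 → ℝ :=
  ![![η / 2, η / 2], ![1, 1]]

noncomputable def abstractTransition (η : ℝ) : Fin 2 → Fin 2 → Fin 2 → ℝ :=
  ![![![1 - η / 2, η / 2], ![1, 0]], ![![0, 1], ![0, 1]]]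

noncomputable def groundValue (η γ : ℝ) : Fin 3 → ℝ :=
  ![loopValue γ η 0 0, loopValue γ η η (loopValue γ 1 0 0), loopValue γ 1 0 0]

noncomputable def groundQ (η γ : ℝ) (s : Fin 3) (a : Fin 2) : ℝ :=
  groundReward η s a + γ * ∑ s', groundTransition η s a s' * groundValue η γ s'

noncomputable def abstractValue (η γ : ℝ) : Fin 2 → ℝ :=
  ![loopValue γ (η / 2) (η / 2) (loopValue γ 1 0 0), loopValue γ 1 0 0]

noncomputable def abstractQ (η γ : ℝ) (sb a : Fin 2) : ℝ :=
  abstractReward η sb a + γ * ∑ sb', abstractTransition η sb a sb' * abstractValue η γ sb'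

/-- The ground value of the lifted abstract policy, which plays `a₁` everywhere. -/
noncomputable def liftedValue (η γ : ℝ) : Fin 3 → ℝ :=
  ![0, loopValue γ η η (loopValue γ 1 0 0), loopValue γ 1 0 0]

theorem groundReward_mem_Icc (hη0 : 0 ≤ η) (hη1 : η ≤ 1) (s : Fin 3) (a : Fin 2) :
    groundReward η s a ∈ Set.Icc 0 1 := by
  fin_cases s <;> fin_cases a <;> simp [groundReward, hη0, hη1]

theorem groundTransition_nonneg (hη0 : 0 ≤ η) (hη1 : η ≤ 1) (s : Fin 3) (a : Fin 2)
    (s' : Fin 3) : 0 ≤ groundTransition η s a s' := by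
  fin_cases s <;> fin_cases a <;> fin_cases s' <;> simp [groundTransition, hη0, hη1]

theorem sum_groundTransition (s : Fin 3) (a : Fin 2) : ∑ s', groundTransition η s a s' = 1 := by
  fin_cases s <;> fin_cases a <;> simp [groundTransition, Fin.sum_univ_three]

theorem abstractTransition_nonneg (hη0 : 0 ≤ η) (hη2 : η ≤ 2) (sb a sb' : Fin 2) :
    0 ≤ abstractTransition η sb a sb' := by
  fin_cases sb <;> fin_cases a <;> fin_cases sb' <;>
    simp only [abstractTransition, Fin.isValue, Fin.zero_eta, Fin.mk_one, Matrix.cons_val',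
      Matrix.cons_val_fin_one, Matrix.cons_val_zero, Matrix.cons_val_one] <;>
    linarith

theorem sum_abstractTransition (sb a : Fin 2) : ∑ sb', abstractTransition η sb a sb' = 1 := by
  fin_cases sb <;> fin_cases a <;> simp [abstractTransition]

theorem abs_groundReward_sub_abstractReward_le (hη : 0 ≤ η) (s : Fin 3) (a : Fin 2) :
    |groundReward η s a - abstractReward η (aggregation s) a| ≤ η := by
  fin_cases s <;> fin_cases a <;>
    simp only [groundReward, abstractReward, aggregation, Fin.isValue, Fin.zero_eta, Fin.mk_one,
      Fin.reduceFinMk, Matrix.cons_val', Matrix.cons_val_fin_one, Matrix.cons_val_zero,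
      Matrix.cons_val_one, Matrix.cons_val] <;>
    exact abs_le.2 ⟨by linarith, by linarith⟩

theorem abs_abstractTransition_sub_sum_groundTransition_le (hη : 0 ≤ η) (s : Fin 3)
    (a sb' : Fin 2) :
    |abstractTransition η (aggregation s) a sb' -
      ∑ g ∈ univ.filter (fun g => aggregation g = sb'), groundTransition η s a g| ≤ η := by
  fin_cases s <;> fin_cases a <;> fin_cases sb' <;>
    simp only [sum_filter, Fin.sum_univ_three] <;>
    simp only [abstractTransition, groundTransition, aggregation, Fin.isValue, Fin.zero_eta,
      Fin.mk_one, Fin.reduceFinMk, Matrix.cons_val', Matrix.cons_val_fin_one, Matrix.cons_val_zero,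
      Matrix.cons_val_one, Matrix.cons_val, zero_ne_one, one_ne_zero, ↓reduceIte, add_zero,
      zero_add] <;>
    exact abs_le.2 ⟨by linarith, by linarith⟩

theorem aggregation_not_injective : ¬ Function.Injective aggregation :=
  fun h => absurd (h (a₁ := 0) (a₂ := 1) rfl) (by decide)

theorem sup'_groundQ (hη : 0 ≤ η) (hγ0 : 0 ≤ γ) (hγ1 : γ < 1) (s : Fin 3) :
    univ.sup' univ_nonempty (groundQ η γ s) = groundValue η γ s := by
  fin_cases s <;>
    simp only [groundQ, groundReward, groundTransition, groundValue, Fin.sum_univ_three,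
      Fin.sup'_univ_two, Fin.isValue, Fin.zero_eta, Fin.mk_one, Fin.reduceFinMk, Matrix.cons_val',
      Matrix.cons_val_fin_one, Matrix.cons_val_zero, Matrix.cons_val_one, Matrix.cons_val, one_mul,
      zero_mul, add_zero, zero_add, max_self]
  · rw [← loopValue_zero_eq_add_mul hγ0 hγ1]
    exact max_eq_right (mul_le_of_le_one_left
      (loopValue_nonneg hγ0 hγ1 le_rfl hη le_rfl) hγ1.le)
  · rw [← loopValue_eq hγ0 hγ1 hη]
    exact max_eq_left (mul_le_of_le_one_left (loopValue_nonneg hγ0 hγ1 hη hη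
      (loopValue_nonneg hγ0 hγ1 le_rfl zero_le_one le_rfl)) hγ1.le)
  · exact (loopValue_zero_eq_add_mul hγ0 hγ1).symm

theorem groundQ_eq_bellman (hη : 0 ≤ η) (hγ0 : 0 ≤ γ) (hγ1 : γ < 1) (s : Fin 3)
    (a : Fin 2) :
    groundQ η γ s a = groundReward η s a +
      γ * ∑ s', groundTransition η s a s' * univ.sup' univ_nonempty (groundQ η γ s') := by
  simp only [sup'_groundQ hη hγ0 hγ1]
  rfl

theorem abstractQ_zero (hη : 0 ≤ η) (hγ0 : 0 ≤ γ) (hγ1 : γ < 1) (sb : Fin 2) :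
    abstractQ η γ sb 0 = abstractValue η γ sb := by
  fin_cases sb <;>
    simp only [abstractQ, abstractReward, abstractTransition, abstractValue, Fin.sum_univ_two,
      Fin.isValue, Fin.zero_eta, Fin.mk_one, Matrix.cons_val', Matrix.cons_val_fin_one,
      Matrix.cons_val_zero, Matrix.cons_val_one, one_mul, zero_mul, zero_add]
  · exact (loopValue_eq hγ0 hγ1 (by positivity)).symm
  · exact (loopValue_zero_eq_add_mul hγ0 hγ1).symm

theorem abstractQ_one_le_zero (hη0 : 0 ≤ η) (hη2 : η ≤ 2) (hγ0 : 0 ≤ γ) (hγ1 : γ < 1)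
    (sb : Fin 2) : abstractQ η γ sb 1 ≤ abstractQ η γ sb 0 := by
  rw [abstractQ_zero hη0 hγ0 hγ1]
  fin_cases sb <;>
    simp only [abstractQ, abstractReward, abstractTransition, abstractValue, Fin.sum_univ_two,
      Fin.isValue, Fin.zero_eta, Fin.mk_one, Matrix.cons_val', Matrix.cons_val_fin_one,
      Matrix.cons_val_zero, Matrix.cons_val_one, one_mul, zero_mul, add_zero, zero_add]
  · have hleak : η / 2 ≤ (1 - γ) * loopValue γ 1 0 0 := by
      rw [loopValue_zero, mul_div_cancel₀ _ (by linarith)]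
      linarith
    linarith [le_one_sub_mul_loopValue (q := η / 2) hγ0 hγ1 (by positivity) hleak]
  · exact (loopValue_zero_eq_add_mul hγ0 hγ1).ge

theorem sup'_abstractQ (hη0 : 0 ≤ η) (hη2 : η ≤ 2) (hγ0 : 0 ≤ γ) (hγ1 : γ < 1)
    (sb : Fin 2) : univ.sup' univ_nonempty (abstractQ η γ sb) = abstractValue η γ sb := by
  rw [Fin.sup'_univ_two, max_eq_left (abstractQ_one_le_zero hη0 hη2 hγ0 hγ1 sb),
    abstractQ_zero hη0 hγ0 hγ1]

theorem abstractQ_eq_bellman (hη0 : 0 ≤ η) (hη2 : η ≤ 2) (hγ0 : 0 ≤ γ) (hγ1 : γ < 1)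
    (sb a : Fin 2) :
    abstractQ η γ sb a = abstractReward η sb a + γ *
      ∑ sb', abstractTransition η sb a sb' * univ.sup' univ_nonempty (abstractQ η γ sb') := by
  simp only [sup'_abstractQ hη0 hη2 hγ0 hγ1]
  rfl

theorem liftedValue_eq (hη : 0 ≤ η) (hγ0 : 0 ≤ γ) (hγ1 : γ < 1) (s : Fin 3) :
    liftedValue η γ s =
      groundReward η s 0 + γ * ∑ s', groundTransition η s 0 s' * liftedValue η γ s' := by
  fin_cases s <;>
    simp only [liftedValue, groundReward, groundTransition, Fin.sum_univ_three, Fin.isValue,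
      Fin.zero_eta, Fin.mk_one, Fin.reduceFinMk, Matrix.cons_val', Matrix.cons_val_fin_one,
      Matrix.cons_val_zero, Matrix.cons_val_one, Matrix.cons_val, one_mul, zero_mul, mul_zero,
      add_zero, zero_add]
  · exact loopValue_eq hγ0 hγ1 hη
  · exact loopValue_zero_eq_add_mul hγ0 hγ1

theorem sup'_groundQ_zero_sub_liftedValue_zero (hη : 0 ≤ η) (hγ0 : 0 ≤ γ) (hγ1 : γ < 1) :
    univ.sup' univ_nonempty (groundQ η γ 0) - liftedValue η γ 0 = η / (1 - γ) := by
  simp [sup'_groundQ hη hγ0 hγ1, groundValue, liftedValue, loopValue_zero]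

end Counterexample

/-- There exists a 3-state, 2-action MDP with rewards in `[0,1]` and a
model-similarity abstraction of parameter `η` (aggregating two of the states)
such that the lifted optimal abstract policy is not `ε`-optimal in the ground
MDP for `ε = η/(1-γ)`: the value gap at the initial state is exactly `η/(1-γ) > 0`. -/
theorem lifted_abstract_policy_not_eps_optimal
    (η γ : ℝ) (hη0 : 0 < η) (hη1 : η < 1) (hγ0 : 0 < γ) (hγ1 : γ < 1) :
    ∃ (RG : Fin 3 → Fin 2 → ℝ) (TG : Fin 3 → Fin 2 → Fin 3 → ℝ)
      (φ : Fin 3 → Fin 2) (RA : Fin 2 → Fin 2 → ℝ) (TA : Fin 2 → Fin 2 → Fin 2 → ℝ)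
      (QG : Fin 3 → Fin 2 → ℝ) (QA : Fin 2 → Fin 2 → ℝ)
      (piA : Fin 2 → Fin 2) (VGA : Fin 3 → ℝ),
      -- a valid ground MDP with rewards in [0,1]
      (∀ s a, RG s a ∈ Set.Icc (0:ℝ) 1) ∧
      (∀ s a s', 0 ≤ TG s a s') ∧ (∀ s a, ∑ s', TG s a s' = 1) ∧
      -- a valid abstract MDP
      (∀ s a s', 0 ≤ TA s a s') ∧ (∀ s a, ∑ s', TA s a s' = 1) ∧
      -- model-similarity abstraction of parameter η
      (∀ s a, |RG s a - RA (φ s) a| ≤ η) ∧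
      (∀ s a sb', |TA (φ s) a sb' -
        ∑ g ∈ Finset.univ.filter (fun g => φ g = sb'), TG s a g| ≤ η) ∧
      -- two of the ground states are aggregated
      (¬ Function.Injective φ) ∧
      -- Bellman optimality equations for ground and abstract MDPs
      (∀ s a, QG s a = RG s a + γ *
        ∑ s', TG s a s' * (Finset.univ.sup' Finset.univ_nonempty fun a' => QG s' a')) ∧
      (∀ sb a, QA sb a = RA sb a + γ *
        ∑ sb', TA sb a sb' * (Finset.univ.sup' Finset.univ_nonempty fun a' => QA sb' a')) ∧
      -- piA is the optimal abstract policy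
      (∀ sb, QA sb (piA sb) = Finset.univ.sup' Finset.univ_nonempty fun a => QA sb a) ∧
      -- VGA is the ground value of the lifted policy
      (∀ s, VGA s = RG s (piA (φ s)) + γ * ∑ s', TG s (piA (φ s)) s' * VGA s') ∧
      -- the suboptimality gap at s₀ is exactly η/(1-γ) > 0
      ((Finset.univ.sup' Finset.univ_nonempty fun a => QG 0 a) - VGA 0 = η / (1 - γ)) ∧
      0 < η / (1 - γ) := by
  have hη := hη0.le
  have hη2 : η ≤ 2 := by linarith
  have hγ := hγ0.le
  exact ⟨groundReward η, groundTransition η, aggregation, abstractReward η,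
    abstractTransition η, groundQ η γ, abstractQ η γ, fun _ => 0, liftedValue η γ,
    groundReward_mem_Icc hη hη1.le, groundTransition_nonneg hη hη1.le, sum_groundTransition,
    abstractTransition_nonneg hη hη2, sum_abstractTransition,
    abs_groundReward_sub_abstractReward_le hη,
    abs_abstractTransition_sub_sum_groundTransition_le hη, aggregation_not_injective,
    groundQ_eq_bellman hη hγ hγ1, abstractQ_eq_bellman hη hη2 hγ hγ1,
    fun sb => (abstractQ_zero hη hγ hγ1 sb).trans (sup'_abstractQ hη hη2 hγ hγ1 sb).symm,
    liftedValue_eq hη hγ hγ1, sup'_groundQ_zero_sub_liftedValue_zero hη hγ hγ1,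
    div_pos hη0 (sub_pos.2 hγ1)⟩
end

section
/- Let ε ∈ [0,1) and α_ε = (1-ε)/(1+ε). In the ε-induced abstraction setting where (1-ε)³·ρᴬ/G ≤ ρ ≤ (1+ε)³·ρᴬ/G and (1-ε)³·ρ'ᴬ/G ≤ ρ' ≤ (1+ε)³·ρ'ᴬ/G with ρᴬ = N̂ᴬ/n̂ᴬ, ρ'ᴬ = (N̂ᴬ+1)/(n̂ᴬ+1), 0 < ρ < ρ' and (1+ε)³ρ'ᴬ/G < 1, the ground pseudo-count N̂ = ρ(1-ρ')/(ρ'-ρ) satisfies N̂ᴬ·f ≤ N̂ ≤ N̂ᴬ·g, where f = (G(n̂ᴬ+1) - (1+ε)³(N̂ᴬ+1))/(G(n̂ᴬ/α_ε³ - N̂ᴬ + (1/α_ε³ - 1)n̂ᴬN̂ᴬ)) and g = (G(n̂ᴬ+1) - (1-ε)³(N̂ᴬ+1))/(G(α_ε³n̂ᴬ - N̂ᴬ - (1-α_ε³)n̂ᴬN̂ᴬ)), provided the denominators are positive. -/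
/-!
On `0 ≤ ρ < ρ' < 1` the pseudo-count `ρ (1 - ρ') / (ρ' - ρ)` increases with `ρ` and decreases
with `ρ'`, so over the box cut out by the `ε`-abstraction bounds it is smallest at the corner
`((1-ε)³ρᴬ/G, (1+ε)³ρ'ᴬ/G)` and largest at `((1+ε)³ρᴬ/G, (1-ε)³ρ'ᴬ/G)`. Clearing denominators,
its values there are exactly `N̂ᴬ f` and `N̂ᴬ g`, the ratio of the two scalings being `α_ε⁻³`
resp. `α_ε³`.
-/

noncomputable def pseudoCount (ρ ρ' : ℝ) : ℝ := ρ * (1 - ρ') / (ρ' - ρ)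

lemma pseudoCount_le_pseudoCount {x x' y y' : ℝ} (hx : 0 ≤ x) (hxx' : x ≤ x') (hx'y : x' < y)
    (hyy' : y ≤ y') (hy' : y' < 1) :
    pseudoCount x y' ≤ pseudoCount x' y := by
  unfold pseudoCount
  rw [div_le_div_iff₀ (by linarith) (by linarith)]
  nlinarith [mul_nonneg (mul_nonneg (sub_nonneg.2 hxx') (by linarith : (0:ℝ) ≤ y'))
      (by linarith : (0:ℝ) ≤ 1 - y),
    mul_nonneg (mul_nonneg hx (sub_nonneg.2 hyy')) (by linarith : (0:ℝ) ≤ 1 - x')]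

section Ratio

variable {c d r N n G : ℝ}

lemma mul_succ_ratio_sub_mul_ratio (hd : d = r * c) (hn : n ≠ 0) (hn1 : n + 1 ≠ 0) (hG : G ≠ 0) :
    d * ((N + 1) / (n + 1) / G) - c * (N / n / G) =
      c * (G * (r * n - N - (1 - r) * n * N)) / (n * (n + 1) * G ^ 2) := by
  subst hd
  field_simp
  ring

-- No hypothesis on the last denominator: when it vanishes, so does `ρ' - ρ`, and both sides are `0`.
lemma pseudoCount_mul_ratio_mul_succ_ratio (hc : c ≠ 0) (hd : d = r * c) (hn : n ≠ 0)
    (hn1 : n + 1 ≠ 0) (hG : G ≠ 0) :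
    pseudoCount (c * (N / n / G)) (d * ((N + 1) / (n + 1) / G)) =
      N * ((G * (n + 1) - d * (N + 1)) / (G * (r * n - N - (1 - r) * n * N))) := by
  unfold pseudoCount
  rw [mul_succ_ratio_sub_mul_ratio hd hn hn1 hG]
  by_cases hD : G * (r * n - N - (1 - r) * n * N) = 0
  · simp [hD]
  · field_simp

lemma mul_ratio_lt_mul_succ_ratio (hc : 0 < c) (hd : d = r * c) (hn : 0 < n) (hG : 0 < G)
    (hD : 0 < G * (r * n - N - (1 - r) * n * N)) :
    c * (N / n / G) < d * ((N + 1) / (n + 1) / G) := by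
  rw [← sub_pos, mul_succ_ratio_sub_mul_ratio hd hn.ne' (by linarith) hG.ne']
  positivity

end Ratio

theorem eps_abstraction_pseudo_count_bounds_general
    (ε : ℝ) (hε0 : 0 ≤ ε) (hε1 : ε < 1)
    (G : ℕ) (hG : 1 ≤ G) (NA nA ρ ρ' : ℝ)
    (hNA : 0 ≤ NA) (hNAnA : NA < nA)
    (hρ0 : 0 < ρ) (hρρ' : ρ < ρ')
    (hlo : (1 - ε) ^ 3 * ((NA / nA) / (G : ℝ)) ≤ ρ)
    (hhi : ρ ≤ (1 + ε) ^ 3 * ((NA / nA) / (G : ℝ)))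
    (hlo' : (1 - ε) ^ 3 * (((NA + 1) / (nA + 1)) / (G : ℝ)) ≤ ρ')
    (hhi' : ρ' ≤ (1 + ε) ^ 3 * (((NA + 1) / (nA + 1)) / (G : ℝ)))
    (hlt1 : (1 + ε) ^ 3 * (((NA + 1) / (nA + 1)) / (G : ℝ)) < 1)
    (hdeng : 0 < (G : ℝ) * (((1 - ε) / (1 + ε)) ^ 3 * nA - NA -
      (1 - ((1 - ε) / (1 + ε)) ^ 3) * nA * NA)) :
    NA * (((G : ℝ) * (nA + 1) - (1 + ε) ^ 3 * (NA + 1)) /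
        ((G : ℝ) * (nA / ((1 - ε) / (1 + ε)) ^ 3 - NA +
          (1 / ((1 - ε) / (1 + ε)) ^ 3 - 1) * nA * NA)))
      ≤ ρ * (1 - ρ') / (ρ' - ρ) ∧
    ρ * (1 - ρ') / (ρ' - ρ)
      ≤ NA * (((G : ℝ) * (nA + 1) - (1 - ε) ^ 3 * (NA + 1)) /
        ((G : ℝ) * (((1 - ε) / (1 + ε)) ^ 3 * nA - NA -
          (1 - ((1 - ε) / (1 + ε)) ^ 3) * nA * NA))) := by
  have hG0 : (0 : ℝ) < G := by exact_mod_cast hG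
  have hnA : 0 < nA := hNA.trans_lt hNAnA
  have hnA1 : nA + 1 ≠ 0 := by linarith
  have hminus : 0 < 1 - ε := by linarith
  have hplus : 0 < 1 + ε := by linarith
  have hα : (1 - ε) ^ 3 = ((1 - ε) / (1 + ε)) ^ 3 * (1 + ε) ^ 3 := by field_simp
  have hα_inv : (1 + ε) ^ 3 = 1 / ((1 - ε) / (1 + ε)) ^ 3 * (1 - ε) ^ 3 := by field_simp
  set α3 := ((1 - ε) / (1 + ε)) ^ 3
  have hρ'1 : ρ' < 1 := hhi'.trans_lt hlt1
  constructor
  · have hden : nA / α3 - NA + (1 / α3 - 1) * nA * NA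
        = 1 / α3 * nA - NA - (1 - 1 / α3) * nA * NA := by ring
    rw [hden, ← pseudoCount_mul_ratio_mul_succ_ratio (by positivity) hα_inv hnA.ne' hnA1 hG0.ne']
    exact pseudoCount_le_pseudoCount (by positivity) hlo hρρ' hhi' hlt1
  · have hcorner := mul_ratio_lt_mul_succ_ratio (by positivity) hα hnA hG0 hdeng
    rw [← pseudoCount_mul_ratio_mul_succ_ratio (by positivity) hα hnA.ne' hnA1 hG0.ne']
    exact pseudoCount_le_pseudoCount hρ0.le hhi hcorner hlo' hρ'1

theorem eps_abstraction_pseudo_count_bounds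
    (ε : ℝ) (hε0 : 0 ≤ ε) (hε1 : ε < 1)
    (G : ℕ) (hG : 1 ≤ G) (NA nA ρ ρ' : ℝ)
    (hNA : 0 ≤ NA) (hNAnA : NA < nA)
    (hρ0 : 0 < ρ) (hρρ' : ρ < ρ')
    (hlo : (1 - ε) ^ 3 * ((NA / nA) / (G : ℝ)) ≤ ρ)
    (hhi : ρ ≤ (1 + ε) ^ 3 * ((NA / nA) / (G : ℝ)))
    (hlo' : (1 - ε) ^ 3 * (((NA + 1) / (nA + 1)) / (G : ℝ)) ≤ ρ')
    (hhi' : ρ' ≤ (1 + ε) ^ 3 * (((NA + 1) / (nA + 1)) / (G : ℝ)))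
    (hlt1 : (1 + ε) ^ 3 * (((NA + 1) / (nA + 1)) / (G : ℝ)) < 1)
    (hdenf : 0 < (G : ℝ) * (nA / ((1 - ε) / (1 + ε)) ^ 3 - NA +
      (1 / ((1 - ε) / (1 + ε)) ^ 3 - 1) * nA * NA))
    (hdeng : 0 < (G : ℝ) * (((1 - ε) / (1 + ε)) ^ 3 * nA - NA -
      (1 - ((1 - ε) / (1 + ε)) ^ 3) * nA * NA)) :
    NA * (((G : ℝ) * (nA + 1) - (1 + ε) ^ 3 * (NA + 1)) /
        ((G : ℝ) * (nA / ((1 - ε) / (1 + ε)) ^ 3 - NA +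
          (1 / ((1 - ε) / (1 + ε)) ^ 3 - 1) * nA * NA)))
      ≤ ρ * (1 - ρ') / (ρ' - ρ) ∧
    ρ * (1 - ρ') / (ρ' - ρ)
      ≤ NA * (((G : ℝ) * (nA + 1) - (1 - ε) ^ 3 * (NA + 1)) /
        ((G : ℝ) * (((1 - ε) / (1 + ε)) ^ 3 * nA - NA -
          (1 - ((1 - ε) / (1 + ε)) ^ 3) * nA * NA))) :=
  eps_abstraction_pseudo_count_bounds_general ε hε0 hε1 G hG NA nA ρ ρ' hNA hNAnA hρ0 hρρ' hlo hhi
    hlo' hhi' hlt1 hdeng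
end
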